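/- For every B ∈ (0,1), the function x ↦ (1-x²)·U'(x) is bounded on (-1,1)∖{-B}, where U' denotes the derivative of U. -/

import Mathlib

/-!
Off `-B`, `U` agrees near `x` with `U₁` or with `y ↦ U₁ (-y) + c₂`, and `1 - x²` is even, so it
suffices to bound `(1 - x²) U₁'(x)` on `(-1, 1)`. That quantity equals
`c₁/(4μ²) · (2(1 - x) - (1 - x²)(ln((1+x)/(1-x)) + 2/(1-B²)))`, and the logarithmic term is
bounded because `(1 - x²) ln((1+x)/(1-x)) = (1-x)·(1+x)ln(1+x) - (1+x)·(1-x)ln(1-x)` and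
`t ln t` is bounded on `(0, 2]`.
-/

noncomputable section

/-- The function `U₁(x) = (c₁(1-x)/(4μ²))·(ln((1+x)/(1-x)) + 2/(1-B²))`. -/
def U₁ (μ c₁ B x : ℝ) : ℝ :=
  c₁ * (1 - x) / (4 * μ ^ 2) * (Real.log ((1 + x) / (1 - x)) + 2 / (1 - B ^ 2))

/-- The function `U` of the switching problem: `U(x) = U₁(x)` for `x ∈ (-B, 1]` and
`U(x) = U₁(-x) + c₂` for `x ∈ (-1, -B]`. -/
def Ufun (μ c₁ c₂ B x : ℝ) : ℝ :=
  if -B < x then U₁ μ c₁ B x else U₁ μ c₁ B (-x) + c₂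

open Real Set

lemma abs_mul_log_le_two {t : ℝ} (ht₀ : 0 < t) (ht₂ : t ≤ 2) : |t * log t| ≤ 2 := by
  rcases le_total t 1 with ht₁ | ht₁
  · rw [mul_comm]
    exact (abs_log_mul_self_lt t ht₀ ht₁).le.trans one_le_two
  · have hlog : log t ≤ t - 1 := log_le_sub_one_of_pos ht₀
    rw [abs_of_nonneg (mul_nonneg ht₀.le (log_nonneg ht₁))]
    nlinarith

lemma abs_one_sub_sq_mul_log_div_le {x : ℝ} (hx : x ∈ Ioo (-1 : ℝ) 1) :
    |(1 - x ^ 2) * log ((1 + x) / (1 - x))| ≤ 8 := by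
  obtain ⟨hx₁, hx₂⟩ := hx
  have hp : 0 < 1 + x := by linarith
  have hm : 0 < 1 - x := by linarith
  have hsplit : (1 - x ^ 2) * log ((1 + x) / (1 - x))
      = (1 - x) * ((1 + x) * log (1 + x)) - (1 + x) * ((1 - x) * log (1 - x)) := by
    rw [log_div hp.ne' hm.ne']
    ring
  have hp' := abs_mul_log_le_two hp (by linarith)
  have hm' := abs_mul_log_le_two hm (by linarith)
  rw [hsplit]
  calc _ ≤ |1 - x| * |(1 + x) * log (1 + x)| + |1 + x| * |(1 - x) * log (1 - x)| := by
        rw [← abs_mul, ← abs_mul]; exact abs_sub _ _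
    _ ≤ 2 * 2 + 2 * 2 := by
        rw [abs_of_pos hp, abs_of_pos hm]; gcongr <;> linarith
    _ = 8 := by norm_num

lemma hasDerivAt_log_one_add_div_one_sub {x : ℝ} (hx : x ∈ Ioo (-1 : ℝ) 1) :
    HasDerivAt (fun y ↦ log ((1 + y) / (1 - y))) (2 / (1 - x ^ 2)) x := by
  obtain ⟨hx₁, hx₂⟩ := hx
  have hp : 1 + x ≠ 0 := by linarith
  have hm : 1 - x ≠ 0 := by linarith
  refine ((((hasDerivAt_id' x).const_add 1).div ((hasDerivAt_id' x).const_sub 1) hm).log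
    (div_ne_zero hp hm)).congr_deriv ?_
  rw [Pi.div_apply, show 1 - x ^ 2 = (1 + x) * (1 - x) by ring]
  field_simp
  ring

lemma hasDerivAt_U₁ (μ c₁ B : ℝ) {x : ℝ} (hx : x ∈ Ioo (-1 : ℝ) 1) :
    HasDerivAt (U₁ μ c₁ B)
      (c₁ / (4 * μ ^ 2) * ((1 - x) * (2 / (1 - x ^ 2)) -
        (log ((1 + x) / (1 - x)) + 2 / (1 - B ^ 2)))) x := by
  refine (((((hasDerivAt_id' x).const_sub 1).const_mul c₁).div_const (4 * μ ^ 2)).mul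
    ((hasDerivAt_log_one_add_div_one_sub hx).add_const (2 / (1 - B ^ 2)))).congr_deriv ?_
  ring

lemma one_sub_sq_mul_deriv_U₁ (μ c₁ B : ℝ) {x : ℝ} (hx : x ∈ Ioo (-1 : ℝ) 1) :
    (1 - x ^ 2) * deriv (U₁ μ c₁ B) x = c₁ / (4 * μ ^ 2) *
      (2 * (1 - x) - (1 - x ^ 2) * (log ((1 + x) / (1 - x)) + 2 / (1 - B ^ 2))) := by
  have hx₂ : 1 - x ^ 2 ≠ 0 := by nlinarith [hx.1, hx.2]
  rw [(hasDerivAt_U₁ μ c₁ B hx).deriv]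
  field_simp

lemma abs_one_sub_sq_mul_deriv_U₁_le (μ c₁ B : ℝ) {x : ℝ} (hx : x ∈ Ioo (-1 : ℝ) 1) :
    |(1 - x ^ 2) * deriv (U₁ μ c₁ B) x| ≤ |c₁ / (4 * μ ^ 2)| * (12 + |2 / (1 - B ^ 2)|) := by
  have hx₂ : 0 ≤ 1 - x ^ 2 := by nlinarith [hx.1, hx.2]
  have hx₂' : 1 - x ^ 2 ≤ 1 := by nlinarith
  rw [one_sub_sq_mul_deriv_U₁ μ c₁ B hx, abs_mul]
  gcongr
  calc _ ≤ |2 * (1 - x)| + (|(1 - x ^ 2) * log ((1 + x) / (1 - x))| +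
        |(1 - x ^ 2) * (2 / (1 - B ^ 2))|) := by
        rw [mul_add]
        exact (abs_sub _ _).trans (add_le_add_right (abs_add_le _ _) _)
    _ ≤ 4 + (8 + |2 / (1 - B ^ 2)|) := by
        have hlin : |2 * (1 - x)| ≤ 4 := by
          rw [abs_of_pos (by linarith [hx.2])]; linarith [hx.1]
        have hconst : |(1 - x ^ 2) * (2 / (1 - B ^ 2))| ≤ |2 / (1 - B ^ 2)| := by
          rw [abs_mul, abs_of_nonneg hx₂]
          exact mul_le_of_le_one_left (abs_nonneg _) hx₂'
        linarith [abs_one_sub_sq_mul_log_div_le hx]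
    _ = _ := by ring

lemma deriv_Ufun_of_neg_lt (μ c₁ c₂ : ℝ) {B x : ℝ} (hx : -B < x) :
    deriv (Ufun μ c₁ c₂ B) x = deriv (U₁ μ c₁ B) x :=
  Filter.EventuallyEq.deriv_eq <| (eventually_gt_nhds hx).mono fun _ hy ↦ if_pos hy

lemma deriv_Ufun_of_lt_neg (μ c₁ c₂ : ℝ) {B x : ℝ} (hx : x < -B) :
    deriv (Ufun μ c₁ c₂ B) x = -deriv (U₁ μ c₁ B) (-x) := by
  have hU : Ufun μ c₁ c₂ B =ᶠ[nhds x] fun y ↦ U₁ μ c₁ B (-y) + c₂ :=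
    (eventually_lt_nhds hx).mono fun _ hy ↦ if_neg hy.not_gt
  rw [hU.deriv_eq, deriv_add_const, deriv_comp_neg]

theorem U_deriv_bounded_general (μ c₁ c₂ : ℝ) (B : ℝ) :
    ∃ C : ℝ, ∀ x ∈ Set.Ioo (-1 : ℝ) 1 \ {-B},
      |(1 - x ^ 2) * deriv (Ufun μ c₁ c₂ B) x| ≤ C := by
  refine ⟨|c₁ / (4 * μ ^ 2)| * (12 + |2 / (1 - B ^ 2)|), fun x ⟨hx, hxB⟩ ↦ ?_⟩
  rcases lt_or_gt_of_ne hxB with hlt | hgt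
  · have hx' : -x ∈ Ioo (-1 : ℝ) 1 := ⟨by linarith [hx.2], by linarith [hx.1]⟩
    rw [deriv_Ufun_of_lt_neg μ c₁ c₂ hlt, mul_neg, abs_neg, ← neg_sq]
    exact abs_one_sub_sq_mul_deriv_U₁_le μ c₁ B hx'
  · rw [deriv_Ufun_of_neg_lt μ c₁ c₂ hgt]
    exact abs_one_sub_sq_mul_deriv_U₁_le μ c₁ B hx

/-- For every `B ∈ (0,1)`, the function `x ↦ (1-x²)·U'(x)` is bounded
on `(-1,1) \ {-B}`, where `U'` denotes the derivative of `U`. -/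
theorem U_deriv_bounded (μ c₀ c₁ c₂ : ℝ) (hμ : 0 < μ) (hc₀ : 0 < c₀) (hc₁ : 0 < c₁)
    (hc₂ : 0 < c₂) (B : ℝ) (hB : B ∈ Set.Ioo (0 : ℝ) 1) :
    ∃ C : ℝ, ∀ x ∈ Set.Ioo (-1 : ℝ) 1 \ {-B},
      |(1 - x ^ 2) * deriv (Ufun μ c₁ c₂ B) x| ≤ C :=
  U_deriv_bounded_general μ c₁ c₂ B
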